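/- arXiv:2111.04616 — 5 statements merged into one kernel-verified Lean document; each statement's English description precedes it below -/
import Mathlib

section
/- The abelianization Γ/Γ' of Γ = SL₂(ℤ) is generated by the image of the matrix T = [[1,1],[0,1]]. -/
open scoped MatrixGroups

open ModularGroup Matrix Subgroup

private lemma SL2Z_S_sq_eq : (S * S : SL(2, ℤ)) = (S * T) ^ 3 := by
  ext i j
  fin_cases i <;> fin_cases j <;>
    simp [pow_succ, Matrix.SpecialLinearGroup.coe_mul, coe_S, coe_T, Matrix.mul_fin_two]

private lemma of_S_mem :
    Abelianization.of S ∈ Subgroup.zpowers (Abelianization.of (T : SL(2, ℤ))) := by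
  have h := congrArg Abelianization.of SL2Z_S_sq_eq
  simp only [_root_.map_mul, map_pow] at h
  set s := Abelianization.of (S : SL(2, ℤ)) with hs
  set t := Abelianization.of (T : SL(2, ℤ)) with ht
  have h' : s * s = s ^ 3 * t ^ 3 := by rw [h, mul_pow]
  have h'' : s * t ^ 3 = 1 := by
    have h2 : s * s * (s * t ^ 3) = s * s * 1 := by
      rw [mul_one]
      calc s * s * (s * t ^ 3) = s ^ 3 * t ^ 3 := by simp [pow_succ, pow_two, mul_assoc]
        _ = s * s := h'.symm
    exact mul_left_cancel h2
  have key : s = (t ^ 3)⁻¹ := eq_inv_of_mul_eq_one_left h''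
  rw [key]
  exact inv_mem (pow_mem (Subgroup.mem_zpowers _) 3)

private lemma of_mem_zpowers_T (A : SL(2, ℤ)) :
    Abelianization.of A ∈ Subgroup.zpowers (Abelianization.of (T : SL(2, ℤ))) := by
  suffices h : ∀ n : ℕ, ∀ A : SL(2, ℤ), (A.1 1 0).natAbs = n →
      Abelianization.of A ∈ Subgroup.zpowers (Abelianization.of (T : SL(2, ℤ))) from
    h _ A rfl
  intro n
  induction n using Nat.strong_induction_on with
  | _ n ih =>
    intro A hA
    by_cases hc : A.1 1 0 = 0
    · -- c = 0 : A is ± an upper triangular unipotent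
      have hdet := A.2
      rw [Matrix.det_fin_two, hc, mul_zero, sub_zero] at hdet
      rcases Int.eq_one_or_neg_one_of_mul_eq_one' hdet with ⟨h1, h2⟩ | ⟨h1, h2⟩
      · have hAeq : A = T ^ (A.1 0 1) := by
          ext i j
          rw [ModularGroup.coe_T_zpow]
          fin_cases i <;> fin_cases j <;> simp [h1, h2, hc]
        rw [hAeq, map_zpow]
        exact zpow_mem (Subgroup.mem_zpowers _) _
      · have hAeq : A = S * S * T ^ (-(A.1 0 1)) := by
          ext i j
          have : ((S * S * T ^ (-(A.1 0 1)) : SL(2, ℤ)) : Matrix (Fin 2) (Fin 2) ℤ)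
              = !![0, -1; 1, 0] * !![0, -1; 1, 0] * !![1, -(A.1 0 1); 0, 1] := by
            simp only [Matrix.SpecialLinearGroup.coe_mul, coe_S, ModularGroup.coe_T_zpow]
          rw [this]
          fin_cases i <;> fin_cases j <;>
            simp [Matrix.mul_fin_two, h1, h2, hc]
        rw [hAeq]
        simp only [_root_.map_mul, map_zpow]
        exact mul_mem (mul_mem of_S_mem of_S_mem) (zpow_mem (Subgroup.mem_zpowers _) _)
    · -- c ≠ 0 : reduce using S and T^k
      set a := A.1 0 0 with ha
      set c := A.1 1 0 with hcdef
      set k : ℤ := -(a / c) with hk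
      set B : SL(2, ℤ) := S * T ^ k * A with hB
      have hBcoe : (B : Matrix (Fin 2) (Fin 2) ℤ)
          = (S : Matrix (Fin 2) (Fin 2) ℤ)
            * ((T ^ k : SL(2, ℤ)) : Matrix (Fin 2) (Fin 2) ℤ)
            * (A : Matrix (Fin 2) (Fin 2) ℤ) := by
        simp only [hB, Matrix.SpecialLinearGroup.coe_mul]
      have hB10 : B.1 1 0 = a % c := by
        rw [hBcoe, coe_S, ModularGroup.coe_T_zpow]
        simp [Matrix.mul_apply, Fin.sum_univ_two, Int.emod_def, hk]
        ring
      have hlt : (B.1 1 0).natAbs < n := by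
        rw [hB10]
        have h1 := Int.emod_nonneg a hc
        have h2 := Int.emod_lt a hc
        omega
      have hBmem := ih _ hlt B rfl
      have hAeq : Abelianization.of A
          = ((Abelianization.of (T : SL(2, ℤ))) ^ k)⁻¹
            * (Abelianization.of (S : SL(2, ℤ)))⁻¹ * Abelianization.of B := by
        rw [hB]
        simp only [_root_.map_mul, map_zpow]
        group
      rw [hAeq]
      exact mul_mem (mul_mem (inv_mem (zpow_mem (Subgroup.mem_zpowers _) k))
        (inv_mem of_S_mem)) hBmem

/-- The abelianization Γ/Γ' of Γ = SL₂(ℤ) is generated by the image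
of the matrix T = [[1,1],[0,1]]. -/
theorem abelianization_SL2Z_generated_by_T :
    Subgroup.zpowers (Abelianization.of ModularGroup.T) = (⊤ : Subgroup (Abelianization SL(2, ℤ))) := by
  rw [eq_top_iff]
  intro x _
  induction x using QuotientGroup.induction_on with
  | _ A => exact of_mem_zpowers_T A
end

section
/- Let d ≥ 1 and let a sequence (aₙ) in a field K(e₁,…,e_d) of rational functions satisfy a₀ = 1 and the recurrence aₙ = -Σ_{k=1}^{min(d,n)} (Q_k(e_j+n-k)/Q₀(e_j+n)) a_{n-k}, where Q_k ∈ ℤ[e₁,…,e_d][X] and Q₀(X) = ∏_{i=1}^d (X - e_i). Then for each n ≥ 1, the product (n! ∏_{i≠j}(e_j - e_i + 1)ₙ) · aₙ lies in ℤ[e₁,…,e_d], where (b)ₙ = b(b+1)⋯(b+n-1) is the rising factorial. -/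
open Polynomial

/-- The rising factorial (b)ₙ = b(b+1)⋯(b+n-1) in a commutative ring. -/
def risingFac {F : Type*} [CommRing F] (b : F) (n : ℕ) : F :=
  ∏ m ∈ Finset.range n, (b + m)

lemma risingFac_succ {F : Type*} [CommRing F] (b : F) (n : ℕ) :
    risingFac b (n + 1) = risingFac b n * (b + n) :=
  Finset.prod_range_succ _ _

lemma risingFac_one {F : Type*} [CommRing F] (n : ℕ) :
    risingFac (1 : F) n = n.factorial := by
  induction n with
  | zero => simp [risingFac]
  | succ n ih =>
    rw [risingFac_succ, ih, Nat.factorial_succ]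
    push_cast; ring

lemma risingFac_split {F : Type*} [CommRing F] (b : F) {m n : ℕ} (h : m ≤ n) :
    risingFac b n = risingFac b m * ∏ t ∈ Finset.Ico m n, (b + t) := by
  unfold risingFac
  rw [Finset.prod_range_mul_prod_Ico _ h]

set_option maxHeartbeats 1600000 in
set_option synthInstance.maxHeartbeats 400000 in
/-- Let (aₙ) in the rational function field ℚ-analogue
Frac(ℤ[e₁,…,e_d]) satisfy a₀ = 1 and the Frobenius recurrence
aₙ = -Σ_{k=1}^{min(d,n)} (Q_k(e_j+n-k)/Q₀(e_j+n)) a_{n-k}, where the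
Q_k ∈ ℤ[e₁,…,e_d][X] and Q₀(X) = ∏ᵢ(X - eᵢ).  Then for each n ≥ 1 the product
(n! ∏_{i≠j}(e_j - e_i + 1)ₙ) · aₙ lies in ℤ[e₁,…,e_d]. -/
theorem frobenius_coefficients_denominators (d : ℕ) (hd : 1 ≤ d) (j : Fin d)
    (Q : ℕ → Polynomial (MvPolynomial (Fin d) ℤ))
    (hQ0 : Q 0 = ∏ i : Fin d, (X - C (MvPolynomial.X i)))
    (a : ℕ → FractionRing (MvPolynomial (Fin d) ℤ))
    (e : Fin d → FractionRing (MvPolynomial (Fin d) ℤ))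
    (he : ∀ i, e i = algebraMap (MvPolynomial (Fin d) ℤ) _ (MvPolynomial.X i))
    (ha0 : a 0 = 1)
    (harec : ∀ n : ℕ, 1 ≤ n → a n =
      -∑ k ∈ Finset.Icc 1 (min d n),
        (Polynomial.aeval (e j + (n : FractionRing (MvPolynomial (Fin d) ℤ)) - (k : ℕ)) (Q k) /
          Polynomial.aeval (e j + (n : FractionRing (MvPolynomial (Fin d) ℤ))) (Q 0)) *
            a (n - k)) :
    ∀ n : ℕ, 1 ≤ n → ∃ P : MvPolynomial (Fin d) ℤ,
      ((n.factorial : FractionRing (MvPolynomial (Fin d) ℤ)) *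
          ∏ i ∈ Finset.univ.erase j, risingFac (e j - e i + 1) n) * a n =
        algebraMap (MvPolynomial (Fin d) ℤ) _ P := by
  set φ := algebraMap (MvPolynomial (Fin d) ℤ) (FractionRing (MvPolynomial (Fin d) ℤ)) with hφ
  have hφinj : Function.Injective φ :=
    IsFractionRing.injective (MvPolynomial (Fin d) ℤ) (FractionRing (MvPolynomial (Fin d) ℤ))
  set D : ℕ → FractionRing (MvPolynomial (Fin d) ℤ) :=
    fun n => (n.factorial : FractionRing (MvPolynomial (Fin d) ℤ)) * ∏ i ∈ Finset.univ.erase j, risingFac (e j - e i + 1) n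
    with hDdef
  have hDeq : ∀ n, D n = ∏ i : Fin d, risingFac (e j - e i + 1) n := by
    intro n
    rw [← Finset.mul_prod_erase Finset.univ _ (Finset.mem_univ j)]
    have h1 : e j - e j + 1 = (1 : FractionRing (MvPolynomial (Fin d) ℤ)) := by ring
    rw [h1, risingFac_one, hDdef]
  have hne : ∀ (i : Fin d) (m : ℕ), (i ≠ j ∨ 1 ≤ m) → e j + (m : FractionRing (MvPolynomial (Fin d) ℤ)) - e i ≠ 0 := by
    intro i m him h
    have h2 : e j + (m : FractionRing (MvPolynomial (Fin d) ℤ)) - e i = φ (MvPolynomial.X j + ((m : ℕ) : MvPolynomial (Fin d) ℤ) - MvPolynomial.X i) := by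
      rw [map_sub, map_add, map_natCast, ← he, ← he]
    rw [h2] at h
    have h3 : MvPolynomial.X j + ((m : ℕ) : MvPolynomial (Fin d) ℤ) - MvPolynomial.X i = (0 : MvPolynomial (Fin d) ℤ) := by
      apply hφinj; rw [h, map_zero]
    have h4 := congrArg (MvPolynomial.eval (fun i' : Fin d => if i' = j then (1 : ℤ) else 0)) h3
    simp only [map_sub, map_add, map_natCast, MvPolynomial.eval_X, map_zero] at h4
    by_cases hij : i = j
    · subst hij
      simp at h4
      rcases him with him | him
      · exact him rfl
      · omega
    · simp [hij] at h4
      omega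
  have hDsucc : ∀ m : ℕ, D (m + 1) = D m * ∏ i : Fin d, (e j + ((m + 1 : ℕ) : FractionRing (MvPolynomial (Fin d) ℤ)) - e i) := by
    intro m
    rw [hDeq, hDeq, ← Finset.prod_mul_distrib]
    apply Finset.prod_congr rfl
    intro i _
    rw [risingFac_succ]
    push_cast; ring
  have hDsplit : ∀ m n : ℕ, m ≤ n →
      D n = D m * ∏ i : Fin d, ∏ t ∈ Finset.Ico m n, (e j - e i + 1 + (t : FractionRing (MvPolynomial (Fin d) ℤ))) := by
    intro m n h
    rw [hDeq, hDeq, ← Finset.prod_mul_distrib]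
    exact Finset.prod_congr rfl fun i _ => risingFac_split _ h
  have key : ∀ n : ℕ, D n * a n ∈ φ.range := by
    intro n
    induction n using Nat.strong_induction_on with
    | _ n ih =>
    rcases Nat.eq_zero_or_pos n with rfl | h1
    · refine ⟨1, ?_⟩
      rw [map_one, ha0, mul_one, hDeq]
      simp only [risingFac, Finset.range_zero, Finset.prod_empty, Finset.prod_const_one]
    · have hmn : ∀ S : FractionRing (MvPolynomial (Fin d) ℤ), D n * -S = -(D n * S) :=
        fun S => by ring
      rw [harec n h1, hmn, Finset.mul_sum]
      apply neg_mem
      apply sum_mem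
      intro k hk
      rw [Finset.mem_Icc] at hk
      obtain ⟨hk1, hk2⟩ := hk
      have hkn : k ≤ n := le_trans hk2 (min_le_right _ _)
      have hlt : n - k < n := by omega
      have hb : Polynomial.aeval (e j + (n : FractionRing (MvPolynomial (Fin d) ℤ))) (Q 0) = ∏ i : Fin d, (e j + (n : FractionRing (MvPolynomial (Fin d) ℤ)) - e i) := by
        rw [hQ0, map_prod]
        exact Finset.prod_congr rfl fun i _ => by rw [map_sub, aeval_X, aeval_C, ← he]
      have hbne : Polynomial.aeval (e j + (n : FractionRing (MvPolynomial (Fin d) ℤ))) (Q 0) ≠ 0 := by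
        rw [hb]
        apply Finset.prod_ne_zero_iff.mpr
        intro i _
        exact hne i n (Or.inr h1)
      have hx : e j + (n : FractionRing (MvPolynomial (Fin d) ℤ)) - ((k : ℕ) : FractionRing (MvPolynomial (Fin d) ℤ)) = φ (MvPolynomial.X j + ((n - k : ℕ) : MvPolynomial (Fin d) ℤ)) := by
        rw [map_add, map_natCast, ← he, Nat.cast_sub hkn]
        push_cast; ring
      have hA : Polynomial.aeval (e j + (n : FractionRing (MvPolynomial (Fin d) ℤ)) - ((k : ℕ) : FractionRing (MvPolynomial (Fin d) ℤ))) (Q k)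
          = φ ((Q k).eval (MvPolynomial.X j + ((n - k : ℕ) : MvPolynomial (Fin d) ℤ))) := by
        rw [hx, aeval_algebraMap_apply_eq_algebraMap_eval]
      set Ep : FractionRing (MvPolynomial (Fin d) ℤ) := ∏ i : Fin d, ∏ t ∈ Finset.Ico (n - k) (n - 1), (e j - e i + 1 + (t : FractionRing (MvPolynomial (Fin d) ℤ)))
        with hEpdef
      have hEk : Ep = φ (∏ i : Fin d, ∏ t ∈ Finset.Ico (n - k) (n - 1),
          (MvPolynomial.X j - MvPolynomial.X i + ((1 + t : ℕ) : MvPolynomial (Fin d) ℤ))) := by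
        rw [map_prod]
        apply Finset.prod_congr rfl
        intro i _
        rw [map_prod]
        apply Finset.prod_congr rfl
        intro t _
        rw [map_add, map_sub, map_natCast, ← he, ← he]
        push_cast; ring
      have hn1 : n - 1 + 1 = n := by omega
      have hDn : D n = (D (n - k) * Ep) * Polynomial.aeval (e j + (n : FractionRing (MvPolynomial (Fin d) ℤ))) (Q 0) := by
        have h5 := hDsucc (n - 1)
        rw [hn1] at h5
        rw [h5, hb, hDsplit (n - k) (n - 1) (by omega), hEpdef]
      obtain ⟨Pk, hPk⟩ := ih (n - k) hlt
      have hterm : D n * ((Polynomial.aeval (e j + (n : FractionRing (MvPolynomial (Fin d) ℤ)) - ((k : ℕ) : FractionRing (MvPolynomial (Fin d) ℤ))) (Q k) /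
            Polynomial.aeval (e j + (n : FractionRing (MvPolynomial (Fin d) ℤ))) (Q 0)) * a (n - k))
          = Polynomial.aeval (e j + (n : FractionRing (MvPolynomial (Fin d) ℤ)) - ((k : ℕ) : FractionRing (MvPolynomial (Fin d) ℤ))) (Q k) * (Ep * (D (n - k) * a (n - k))) := by
        rw [hDn]
        field_simp
      rw [hterm, hA, hEk, ← hPk, ← map_mul, ← map_mul]
      exact ⟨_, rfl⟩
  intro n hn
  obtain ⟨P, hP⟩ := key n
  exact ⟨P, hP.symm⟩
end

section
/- Let λ ∈ ℂ×, ω a primitive cube root of unity, ε ∈ {0,±1}, and let ρ be the 4-dimensional monomial representation of Γ = SL₂(ℤ) induced (via PSL₂(ℤ)) from the character χ of Γ₀(3) with χ(U³) = λ, χ(A) = ω^ε, using coset representatives I, U, U², S. Then ρ is irreducible if and only if λ⁴ ≠ 1. -/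
open scoped MatrixGroups

open ModularGroup in
lemma sl2_gen_aux (γ : SL(2, ℤ)) : γ ∈ Subgroup.closure {ModularGroup.S, ModularGroup.T} := by
  set G := Subgroup.closure {ModularGroup.S, ModularGroup.T} with hG
  have hS : ModularGroup.S ∈ G := Subgroup.subset_closure (by simp)
  have hT : ModularGroup.T ∈ G := Subgroup.subset_closure (by simp)
  suffices h : ∀ n : ℕ, ∀ γ : SL(2, ℤ), ((γ : Matrix (Fin 2) (Fin 2) ℤ) 1 0).natAbs = n → γ ∈ G by
    exact h _ γ rfl
  intro n
  induction n using Nat.strong_induction_on with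
  | _ n ih =>
  intro γ hn
  by_cases hc : (γ : Matrix (Fin 2) (Fin 2) ℤ) 1 0 = 0
  · -- c = 0
    have hdet := γ.2
    rw [Matrix.det_fin_two, hc] at hdet
    simp only [mul_zero, sub_zero] at hdet
    rcases Int.mul_eq_one_iff_eq_one_or_neg_one.mp hdet with ⟨ha, hd⟩ | ⟨ha, hd⟩
    · have : γ = ModularGroup.T ^ ((γ : Matrix (Fin 2) (Fin 2) ℤ) 0 1) := by
        apply Subtype.ext
        show (γ : Matrix (Fin 2) (Fin 2) ℤ) = _
        rw [coe_T_zpow, Matrix.eta_fin_two (γ : Matrix (Fin 2) (Fin 2) ℤ)]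
        rw [ha, hd, hc]
        simp
      rw [this]; exact zpow_mem hT _
    · have : γ = ModularGroup.S * ModularGroup.S *
          ModularGroup.T ^ (-(γ : Matrix (Fin 2) (Fin 2) ℤ) 0 1) := by
        apply Subtype.ext
        show (γ : Matrix (Fin 2) (Fin 2) ℤ) = _
        have : ((ModularGroup.S * ModularGroup.S *
            ModularGroup.T ^ (-(γ : Matrix (Fin 2) (Fin 2) ℤ) 0 1) : SL(2,ℤ)) :
            Matrix (Fin 2) (Fin 2) ℤ) = (-1) * !![1, -(γ : Matrix (Fin 2) (Fin 2) ℤ) 0 1; 0, 1] := by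
          rw [Matrix.SpecialLinearGroup.coe_mul, Matrix.SpecialLinearGroup.coe_mul,
            S_mul_S_eq, coe_T_zpow]
        rw [this, Matrix.eta_fin_two (γ : Matrix (Fin 2) (Fin 2) ℤ), ha, hd, hc]
        norm_num
      rw [this]; exact mul_mem (mul_mem hS hS) (zpow_mem hT _)
  · -- c ≠ 0
    set a := (γ : Matrix (Fin 2) (Fin 2) ℤ) 0 0 with haa
    set c := (γ : Matrix (Fin 2) (Fin 2) ℤ) 1 0 with hcc
    set q : ℤ := a / c with hq
    set γ' := ModularGroup.S * ModularGroup.T ^ (-q) * γ with hγ'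
    have hentry : (γ' : Matrix (Fin 2) (Fin 2) ℤ) 1 0 = a % c := by
      rw [hγ', Matrix.SpecialLinearGroup.coe_mul, Matrix.SpecialLinearGroup.coe_mul,
        coe_S, coe_T_zpow]
      rw [Matrix.eta_fin_two (γ : Matrix (Fin 2) (Fin 2) ℤ)]
      simp [Matrix.mul_apply, Fin.sum_univ_two, ← haa, ← hcc]
      rw [Int.emod_def]; ring
    have hlt : ((γ' : Matrix (Fin 2) (Fin 2) ℤ) 1 0).natAbs < n := by
      rw [hentry, ← hn]
      have h1 : 0 ≤ a % c := Int.emod_nonneg a hc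
      have h2 : a % c < |c| := by
        have := Int.emod_lt a hc; rw [Int.abs_eq_natAbs]; exact this
      rw [Int.abs_eq_natAbs] at h2
      omega
    have hmem : γ' ∈ G := ih _ hlt γ' rfl
    have : γ = (ModularGroup.S * ModularGroup.T ^ (-q))⁻¹ * γ' := by
      rw [hγ']; group
    rw [this]
    exact mul_mem (inv_mem (mul_mem hS (zpow_mem hT _))) hmem


/-- The 4-dimensional monomial representation ρ of SL₂(ℤ)
induced from the character χ of Γ₀(3) with χ(U³) = λ, χ(A) = ω^ε (where
U = S⁻¹T⁻¹S, A = U³T⁻¹, ω a primitive cube root of unity, ε ∈ {0,±1}), given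
on the coset basis by ρ(U) : v₁↦v₂↦v₃↦λv₁, v₄↦λ⁻¹ω^ε v₄ and
ρ(S) : v₁↔v₄, v₂↦ω⁻^ε v₃, v₃↦ω^ε v₂, is irreducible if and only if λ⁴ ≠ 1. -/
theorem induced_rep_irreducible_iff (l ω : ℂ) (hl : l ≠ 0)
    (hω : IsPrimitiveRoot ω 3) (ε : ℤ) (hε : ε = 0 ∨ ε = 1 ∨ ε = -1)
    (ρ : SL(2, ℤ) →* GL (Fin 4) ℂ)
    (hU : (ρ (ModularGroup.S⁻¹ * ModularGroup.T⁻¹ * ModularGroup.S) :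
        Matrix (Fin 4) (Fin 4) ℂ) =
      !![0, 0, l, 0;
         1, 0, 0, 0;
         0, 1, 0, 0;
         0, 0, 0, l⁻¹ * ω ^ ε])
    (hS : (ρ ModularGroup.S : Matrix (Fin 4) (Fin 4) ℂ) =
      !![0, 0, 0, 1;
         0, 0, ω ^ ε, 0;
         0, ω ^ (-ε), 0, 0;
         1, 0, 0, 0]) :
    (∀ W : Submodule ℂ (Fin 4 → ℂ),
        (∀ (γ : SL(2, ℤ)) (v : Fin 4 → ℂ), v ∈ W →
          (ρ γ : Matrix (Fin 4) (Fin 4) ℂ).mulVec v ∈ W) →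
        W = ⊥ ∨ W = ⊤) ↔ l ^ 4 ≠ 1 := by
  constructor
  · intro H
    intro hl4
    have hω3 : ω ^ 3 = 1 := hω.pow_eq_one
    have hω0 : ω ≠ 0 := hω.ne_zero (by norm_num)
    have hω1 : ω ≠ 1 := hω.ne_one (by norm_num)
    have hωsum : ω ^ 2 + ω + 1 = 0 := by
      have h := hω3
      have : (ω - 1) * (ω ^ 2 + ω + 1) = 0 := by linear_combination h
      rcases mul_eq_zero.mp this with h' | h'
      · exact absurd (sub_eq_zero.mp h') hω1
      · exact h'
    set z : ℂ := ω ^ ε with hzdef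
    have hz3 : z ^ 3 = 1 := by
      rcases hε with h | h | h <;> subst h
      · simp [hzdef]
      · simpa [hzdef] using hω3
      · show (ω ^ (-1 : ℤ)) ^ 3 = 1
        rw [zpow_neg, zpow_one, inv_pow, hω3, inv_one]
    have hz0 : z ≠ 0 := fun h => by rw [h] at hz3; simp at hz3
    have hzy : ω ^ (-ε) = z ^ 2 := by
      have h1 : z * ω ^ (-ε) = 1 := by
        rcases hε with h | h | h <;> subst h
        · simp [hzdef]
        · show ω ^ (1:ℤ) * ω ^ (-1:ℤ) = 1
          rw [zpow_neg, zpow_one, mul_inv_cancel₀ hω0]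
        · show ω ^ (-1:ℤ) * ω ^ (-(-1):ℤ) = 1
          rw [neg_neg, zpow_neg, zpow_one, inv_mul_cancel₀ hω0]
      have h2 : z * z ^ 2 = 1 := by rw [← pow_succ']; exact hz3
      calc ω ^ (-ε) = z⁻¹ * (z * ω ^ (-ε)) := by field_simp
        _ = z⁻¹ * (z * z ^ 2) := by rw [h1, h2]
        _ = z ^ 2 := by field_simp
    set MU : Matrix (Fin 4) (Fin 4) ℂ :=
      !![0, 0, l, 0; 1, 0, 0, 0; 0, 1, 0, 0; 0, 0, 0, l⁻¹ * z] with hMU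
    set MS : Matrix (Fin 4) (Fin 4) ℂ :=
      !![0, 0, 0, 1; 0, 0, z, 0; 0, ω ^ (-ε), 0, 0; 1, 0, 0, 0] with hMS
    have mulU : ∀ v : Fin 4 → ℂ, MU.mulVec v = ![l * v 2, v 0, v 1, (l⁻¹ * z) * v 3] := by
      intro v; funext i; fin_cases i <;>
        simp [hMU, Matrix.mulVec, dotProduct, Fin.sum_univ_four]
    have mulS : ∀ v : Fin 4 → ℂ, MS.mulVec v = ![v 3, z * v 2, z ^ 2 * v 1, v 0] := by
      intro v; funext i; fin_cases i <;>
        simp [hMS, hzy, Matrix.mulVec, dotProduct, Fin.sum_univ_four]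
    -- abbreviation for the predicate
    set P : SL(2, ℤ) → Prop :=
      fun g => ∀ W : Submodule ℂ (Fin 4 → ℂ), (∀ v ∈ W, MU.mulVec v ∈ W) →
        (∀ v ∈ W, MS.mulVec v ∈ W) → ∀ v ∈ W, (ρ g : Matrix (Fin 4) (Fin 4) ℂ).mulVec v ∈ W
      with hP
    have hPmul : ∀ g₁ g₂, P g₁ → P g₂ → P (g₁ * g₂) := by
      intro g₁ g₂ h₁ h₂ W hWU hWS v hv
      rw [map_mul, Units.val_mul, ← Matrix.mulVec_mulVec]
      exact h₁ W hWU hWS _ (h₂ W hWU hWS v hv)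
    have hPinv : ∀ g, P g → P g⁻¹ := by
      intro g hg W hWU hWS v hv
      have hinv1 : (ρ g⁻¹ : Matrix (Fin 4) (Fin 4) ℂ) * (ρ g : Matrix (Fin 4) (Fin 4) ℂ) = 1 := by
        rw [map_inv, ← Units.val_mul, inv_mul_cancel]; rfl
      set f : (Fin 4 → ℂ) →ₗ[ℂ] (Fin 4 → ℂ) := (ρ g : Matrix (Fin 4) (Fin 4) ℂ).mulVecLin with hf
      have hfinj : Function.Injective f := by
        intro x y hxy
        have := congrArg (ρ g⁻¹ : Matrix (Fin 4) (Fin 4) ℂ).mulVec hxy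
        rwa [hf, Matrix.mulVecLin_apply, Matrix.mulVecLin_apply, Matrix.mulVec_mulVec,
          Matrix.mulVec_mulVec, hinv1, Matrix.one_mulVec, Matrix.one_mulVec] at this
      have hmaple : Submodule.map f W ≤ W := by
        rintro x ⟨u, hu, rfl⟩
        exact hg W hWU hWS u hu
      have hmapeq : Submodule.map f W = W := by
        apply Submodule.eq_of_le_of_finrank_le hmaple
        exact le_of_eq (Submodule.equivMapOfInjective f hfinj W).finrank_eq
      rw [← hmapeq] at hv
      obtain ⟨u, hu, rfl⟩ := hv
      show (ρ g⁻¹ : Matrix (Fin 4) (Fin 4) ℂ).mulVec (f u) ∈ W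
      rw [hf, Matrix.mulVecLin_apply, Matrix.mulVec_mulVec, hinv1, Matrix.one_mulVec]
      exact hu
    have hPS : P ModularGroup.S := by
      intro W hWU hWS v hv
      rw [hS]; exact hWS v hv
    have hPUel : P (ModularGroup.S⁻¹ * ModularGroup.T⁻¹ * ModularGroup.S) := by
      intro W hWU hWS v hv
      rw [hU]; exact hWU v hv
    have hPT : P ModularGroup.T := by
      have hTeq : ModularGroup.T = ModularGroup.S *
          (ModularGroup.S⁻¹ * ModularGroup.T⁻¹ * ModularGroup.S)⁻¹ * ModularGroup.S⁻¹ := by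
        group
      rw [hTeq]
      exact hPmul _ _ (hPmul _ _ hPS (hPinv _ hPUel)) (hPinv _ hPS)
    have hPall : ∀ γ : SL(2, ℤ), P γ := by
      intro γ
      have hγ := sl2_gen_aux γ
      induction hγ using Subgroup.closure_induction with
      | mem x hx =>
        rcases hx with h | h
        · rw [h]; exact hPS
        · rw [h]; exact hPT
      | one =>
        intro W hWU hWS v hv
        rw [map_one, Units.val_one, Matrix.one_mulVec]; exact hv
      | mul x y hx hy px py => exact hPmul _ _ px py
      | inv x hx px => exact hPinv _ px
    -- now construct the invariant subspace
    have hl2 : l ^ 2 = 1 ∨ l ^ 2 = -1 := by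
      have : (l ^ 2 - 1) * (l ^ 2 + 1) = 0 := by linear_combination hl4
      rcases mul_eq_zero.mp this with h | h
      · left; linear_combination h
      · right; linear_combination h
    have spanstep : ∀ (M : Matrix (Fin 4) (Fin 4) ℂ) (s : Set (Fin 4 → ℂ)),
        (∀ x ∈ s, M.mulVec x ∈ Submodule.span ℂ s) →
        ∀ v ∈ Submodule.span ℂ s, M.mulVec v ∈ Submodule.span ℂ s := by
      intro M s h v hv
      have hle : Submodule.span ℂ s ≤ (Submodule.span ℂ s).comap M.mulVecLin :=
        Submodule.span_le.mpr fun x hx => by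
          simpa [Submodule.mem_comap, Matrix.mulVecLin_apply] using h x hx
      simpa [Submodule.mem_comap, Matrix.mulVecLin_apply] using hle hv
    rcases hl2 with hl2 | hl2
    · -- case l^2 = 1
      have hlinv : l⁻¹ = l := by
        refine inv_eq_of_mul_eq_one_right ?_
        linear_combination hl2
      set w : Fin 4 → ℂ := ![z^2, l*z, 1, l*z^2] with hw
      set W := Submodule.span ℂ ({w} : Set (Fin 4 → ℂ)) with hWdef
      have hwW : w ∈ W := Submodule.subset_span rfl
      have hUw : MU.mulVec w = (l*z) • w := by
        rw [mulU, hlinv]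
        funext i; fin_cases i <;> simp [hw, smul_eq_mul]
        · linear_combination (-l) * hz3
        · linear_combination (-z^2) * hl2
      have hSw : MS.mulVec w = l • w := by
        rw [mulS]
        funext i; fin_cases i <;> simp [hw, smul_eq_mul]
        · linear_combination (-z) * hl2
        · linear_combination l * hz3
        · linear_combination (-z^2) * hl2
      have hWU : ∀ v ∈ W, MU.mulVec v ∈ W := by
        apply spanstep
        rintro x rfl
        rw [hUw]; exact W.smul_mem _ hwW
      have hWS : ∀ v ∈ W, MS.mulVec v ∈ W := by
        apply spanstep
        rintro x rfl
        rw [hSw]; exact W.smul_mem _ hwW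
      rcases H W (fun γ v hv => hPall γ W hWU hWS v hv) with hb | ht
      · have : w = 0 := by rwa [hb, Submodule.mem_bot] at hwW
        have h2 := congrFun this 2
        simp [hw] at h2
      · have he0 : (![1,0,0,0] : Fin 4 → ℂ) ∈ W := by rw [ht]; trivial
        rw [hWdef, Submodule.mem_span_singleton] at he0
        obtain ⟨a, ha⟩ := he0
        have h2 := congrFun ha 2
        have h0 := congrFun ha 0
        simp [hw, smul_eq_mul] at h2 h0
        rw [h2] at h0
        simp at h0
    · -- case l^2 = -1
      have hlinv : l⁻¹ = -l := by
        refine inv_eq_of_mul_eq_one_right ?_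
        linear_combination -hl2
      set w : Fin 4 → ℂ := ![l^2*z^2*ω^2, -(l*z*ω), 1, 0] with hw
      set u : Fin 4 → ℂ := ![0, z, -(l*z^3*ω), l^2*z^2*ω^2] with hu
      set W := Submodule.span ℂ ({w, u} : Set (Fin 4 → ℂ)) with hWdef
      have hwW : w ∈ W := Submodule.subset_span (by left; rfl)
      have huW : u ∈ W := Submodule.subset_span (by right; rfl)
      have hUw : MU.mulVec w = (-(l*z*ω)) • w := by
        rw [mulU, hlinv]
        funext i; fin_cases i <;> simp [hw, smul_eq_mul]
        · linear_combination (-(l*ω^3)) * hz3 + (-l) * hω3 + (l*z^3*ω^3) * hl2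
        · ring
      have hUu : MU.mulVec u = (l^2*z^4*ω^2) • w + (-(l*z)) • u := by
        rw [mulU, hlinv]
        funext i; fin_cases i <;> simp [hw, hu, smul_eq_mul]
        · linear_combination (ω - ω^4 - z^3*ω^4) * hz3 + (-ω) * hω3 +
            (-(z^3*ω) + z^6*ω^4 - l^2*z^6*ω^4) * hl2
        · linear_combination (-(l*z^2*ω^3)) * hz3 + (-(l*z^2)) * hω3 + (l*z^5*ω^3) * hl2
        · linear_combination (z*ω + z*ω^2) * hz3 + (-(z^4*ω) - z^4*ω^2) * hl2 + z * hωsum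
      have hSw : MS.mulVec w = u := by
        rw [mulS]
        funext i; fin_cases i <;> simp [hw, hu] <;> ring
      have hSu : MS.mulVec u = w := by
        rw [mulS]
        funext i; fin_cases i <;> simp [hw, hu]
        · linear_combination (l*z*ω) * hz3
        · linear_combination hz3
      have hWU : ∀ v ∈ W, MU.mulVec v ∈ W := by
        apply spanstep
        rintro x (rfl | rfl)
        · rw [hUw]; exact W.smul_mem _ hwW
        · rw [hUu]; exact W.add_mem (W.smul_mem _ hwW) (W.smul_mem _ huW)
      have hWS : ∀ v ∈ W, MS.mulVec v ∈ W := by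
        apply spanstep
        rintro x (rfl | rfl)
        · rw [hSw]; exact huW
        · rw [hSu]; exact hwW
      rcases H W (fun γ v hv => hPall γ W hWU hWS v hv) with hb | ht
      · have : w = 0 := by rwa [hb, Submodule.mem_bot] at hwW
        have h2 := congrFun this 2
        simp [hw] at h2
      · have he0 : (![1,0,0,0] : Fin 4 → ℂ) ∈ W := by rw [ht]; trivial
        rw [hWdef, Submodule.mem_span_pair] at he0
        obtain ⟨a, b, hab⟩ := he0
        have h3 := congrFun hab 3
        have h2 := congrFun hab 2
        have h0 := congrFun hab 0
        simp [hw, hu, smul_eq_mul] at h3 h2 h0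
        have hb0 : b = 0 := by
          rcases h3 with h | (h | h) | h
          exacts [h, absurd h hl, absurd h hz0, absurd h hω0]
        subst hb0
        simp at h2
        subst h2
        simp [hl, hz0, hω0] at h0
  · intro hl4 W hW
    have hω3 : ω ^ 3 = 1 := hω.pow_eq_one
    set z : ℂ := ω ^ ε with hzdef
    have hz3 : z ^ 3 = 1 := by
      rcases hε with h | h | h <;> subst h
      · simp [hzdef]
      · simpa [hzdef] using hω3
      · show (ω ^ (-1 : ℤ)) ^ 3 = 1
        rw [zpow_neg, zpow_one, inv_pow, hω3, inv_one]
    set MU : Matrix (Fin 4) (Fin 4) ℂ :=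
      !![0, 0, l, 0; 1, 0, 0, 0; 0, 1, 0, 0; 0, 0, 0, l⁻¹ * z] with hMU
    set MS : Matrix (Fin 4) (Fin 4) ℂ :=
      !![0, 0, 0, 1; 0, 0, z, 0; 0, ω ^ (-ε), 0, 0; 1, 0, 0, 0] with hMS
    have hWU : ∀ v ∈ W, MU.mulVec v ∈ W := fun v hv => by
      have := hW (ModularGroup.S⁻¹ * ModularGroup.T⁻¹ * ModularGroup.S) v hv
      rwa [hU] at this
    have hWS : ∀ v ∈ W, MS.mulVec v ∈ W := fun v hv => by
      have := hW ModularGroup.S v hv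
      rwa [hS] at this
    have mulU : ∀ v : Fin 4 → ℂ, MU.mulVec v = ![l * v 2, v 0, v 1, (l⁻¹ * z) * v 3] := by
      intro v; funext i; fin_cases i <;>
        simp [hMU, Matrix.mulVec, dotProduct, Fin.sum_univ_four]
    have mulS : ∀ v : Fin 4 → ℂ, MS.mulVec v = ![v 3, z * v 2, ω ^ (-ε) * v 1, v 0] := by
      intro v; funext i; fin_cases i <;>
        simp [hMS, Matrix.mulVec, dotProduct, Fin.sum_univ_four]
    by_cases hbot : W = ⊥
    · exact Or.inl hbot
    right
    obtain ⟨v, hv, hv0⟩ := Submodule.exists_mem_ne_zero_of_ne_bot hbot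
    -- step 1: from any w ∈ W with w 3 ≠ 0, get e3 ∈ W
    have step1 : ∀ w ∈ W, w 3 ≠ 0 → (![0, 0, 0, 1] : Fin 4 → ℂ) ∈ W := by
      intro w hw h3
      set c : ℂ := ((l⁻¹ * z) ^ 3 - l) * w 3 with hc
      have hcne : c ≠ 0 := by
        apply mul_ne_zero _ h3
        rw [mul_pow, hz3, mul_one]
        intro h
        apply hl4
        rw [sub_eq_zero] at h
        have h4 : l ^ 3 * l⁻¹ ^ 3 = 1 := by
          rw [← mul_pow, mul_inv_cancel₀ hl, one_pow]
        calc l ^ 4 = l ^ 3 * l := by ring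
          _ = l ^ 3 * l⁻¹ ^ 3 := by rw [h]
          _ = 1 := h4
      have hmem : MU.mulVec (MU.mulVec (MU.mulVec w)) - l • w ∈ W :=
        W.sub_mem (hWU _ (hWU _ (hWU _ hw))) (W.smul_mem l hw)
      have heq : MU.mulVec (MU.mulVec (MU.mulVec w)) - l • w = c • ![0, 0, 0, 1] := by
        rw [mulU, mulU, mulU]
        funext i; fin_cases i <;>
          simp [hc, Pi.smul_apply, smul_eq_mul] <;> ring
      rw [heq] at hmem
      have hmem2 := W.smul_mem c⁻¹ hmem
      rwa [smul_smul, inv_mul_cancel₀ hcne, one_smul] at hmem2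
    -- step 2: find w ∈ W with w 3 ≠ 0
    have step2 : ∃ w ∈ W, w 3 ≠ 0 := by
      by_cases h3 : v 3 ≠ 0
      · exact ⟨v, hv, h3⟩
      by_cases h0 : v 0 ≠ 0
      · refine ⟨MS.mulVec v, hWS v hv, ?_⟩
        rw [mulS]; simpa using h0
      by_cases h2 : v 2 ≠ 0
      · refine ⟨MS.mulVec (MU.mulVec v), hWS _ (hWU v hv), ?_⟩
        rw [mulU, mulS]; simpa using mul_ne_zero hl h2
      have h1 : v 1 ≠ 0 := by
        intro h1
        apply hv0
        push_neg at h3 h0 h2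
        funext i; fin_cases i <;> assumption
      refine ⟨MS.mulVec (MU.mulVec (MU.mulVec v)), hWS _ (hWU _ (hWU v hv)), ?_⟩
      rw [mulU, mulU, mulS]; simpa using mul_ne_zero hl h1
    obtain ⟨w, hw, hw3⟩ := step2
    have he3 : (![0, 0, 0, 1] : Fin 4 → ℂ) ∈ W := step1 w hw hw3
    have he0 : (![1, 0, 0, 0] : Fin 4 → ℂ) ∈ W := by
      have := hWS _ he3
      rw [mulS] at this
      simpa using this
    have he1 : (![0, 1, 0, 0] : Fin 4 → ℂ) ∈ W := by
      have := hWU _ he0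
      rw [mulU] at this
      simpa using this
    have he2 : (![0, 0, 1, 0] : Fin 4 → ℂ) ∈ W := by
      have := hWU _ he1
      rw [mulU] at this
      simpa using this
    rw [eq_top_iff]
    intro x _
    have hx : x = x 0 • ![1, 0, 0, 0] + x 1 • ![0, 1, 0, 0] + x 2 • ![0, 0, 1, 0]
        + x 3 • ![(0:ℂ), 0, 0, 1] := by
      funext i; fin_cases i <;> simp
    rw [hx]
    exact W.add_mem (W.add_mem (W.add_mem (W.smul_mem _ he0) (W.smul_mem _ he1))
      (W.smul_mem _ he2)) (W.smul_mem _ he3)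
end

section
/- If ρ : SL₂(ℤ) → GL_d(ℂ) has solvable image and the kernel of ρ contains the principal congruence subgroup Γ(N) with N minimal, then N = 2^a·3^b for some nonnegative integers a, b. -/
open scoped MatrixGroups
open CongruenceSubgroup Matrix

namespace SolvableLevelAux

def E12 (t : ℤ) : SL(2, ℤ) := ⟨!![1, t; 0, 1], by simp [Matrix.det_fin_two_of]⟩
def E21 (t : ℤ) : SL(2, ℤ) := ⟨!![1, 0; t, 1], by simp [Matrix.det_fin_two_of]⟩

lemma solve (q m c t : ℤ) (hc : IsCoprime c q) (hm : IsCoprime m q) :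
    ∃ s : ℤ, m ∣ s ∧ q ∣ c * s - t := by
  obtain ⟨A, B, h⟩ := hm.mul_left hc
  refine ⟨m * (A * t), dvd_mul_right _ _, ⟨-(B * t), ?_⟩⟩
  have : c * (m * (A * t)) - t = (A * (m * c) + B * q) * t - t - q * (B * t) := by ring
  rw [this, h]; ring

lemma cast_eq_of_dvd {n : ℕ} {x y : ℤ} (h : (n : ℤ) ∣ x - y) :
    ((x : ZMod n) = (y : ZMod n)) := by
  have := (ZMod.intCast_zmod_eq_zero_iff_dvd (x - y) n).mpr h
  push_cast at this
  linear_combination this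

lemma E12_mem_Gamma {M : ℕ} {s : ℤ} (hs : (M : ℤ) ∣ s) : E12 s ∈ Gamma M := by
  have h0 : ((s : ZMod M)) = 0 := (ZMod.intCast_zmod_eq_zero_iff_dvd s M).mpr hs
  rw [Gamma_mem]
  refine ⟨?_, ?_, ?_, ?_⟩ <;> simp [E12, h0]

lemma E21_mem_Gamma {M : ℕ} {s : ℤ} (hs : (M : ℤ) ∣ s) : E21 s ∈ Gamma M := by
  have h0 : ((s : ZMod M)) = 0 := (ZMod.intCast_zmod_eq_zero_iff_dvd s M).mpr hs
  rw [Gamma_mem]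
  refine ⟨?_, ?_, ?_, ?_⟩ <;> simp [E21, h0]

lemma rho_congr {d : ℕ} (ρ : SL(2, ℤ) →* GL (Fin d) ℂ) {n : ℕ}
    (hker : Gamma n ≤ ρ.ker) {P Q : SL(2, ℤ)}
    (h : ∀ i j, ((P i j : ℤ) : ZMod n) = ((Q i j : ℤ) : ZMod n)) : ρ P = ρ Q := by
  set π := @Matrix.SpecialLinearGroup.map (Fin 2) _ _ _ _ _ _ (Int.castRingHom (ZMod n)) with hπ
  have hPQ : π P = π Q := by
    ext i j
    simpa [hπ] using h i j
  have hmem : P * Q⁻¹ ∈ Gamma n := by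
    show P * Q⁻¹ ∈ π.ker
    rw [MonoidHom.mem_ker, _root_.map_mul, _root_.map_inv, hPQ, mul_inv_cancel]
  have h1 := hker hmem
  rw [MonoidHom.mem_ker, _root_.map_mul, _root_.map_inv, mul_inv_eq_one] at h1
  exact h1

lemma exists_u (p k M : ℕ) (hp : p.Prime) (hp5 : 5 ≤ p) (hk : 1 ≤ k)
    (hcop : IsCoprime ((M : ℤ)) ((p : ℤ) ^ k)) :
    ∃ u w e : ℤ, (M : ℤ) ∣ u - 1 ∧ ((p : ℤ)) ^ k ∣ u - 2 ∧
      u * w = 1 + ((p : ℤ) ^ k * M) * e ∧ ((p : ℤ) ^ k * M) ∣ e ∧ (M : ℤ) ∣ w - 1 ∧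
      IsCoprime u ((p : ℤ) ^ k) ∧ IsCoprime (w ^ 2 - 1) ((p : ℤ) ^ k) ∧
      IsCoprime w ((p : ℤ) ^ k) := by
  set q : ℤ := (p : ℤ) ^ k with hq
  have hpZ : Prime (p : ℤ) := Nat.prime_iff_prime_int.mp hp
  have hpq : (p : ℤ) ∣ q := dvd_pow_self _ (by omega)
  obtain ⟨i, j, hij⟩ := hcop
  set u : ℤ := 1 + M * i with hu
  have hu1 : (M : ℤ) ∣ u - 1 := ⟨i, by ring⟩
  have hu2 : q ∣ u - 2 := ⟨-j, by linarith [hij]⟩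
  have hpu : ¬ (p : ℤ) ∣ u := by
    intro hdvd
    have h2 : (p : ℤ) ∣ 2 := by
      have := dvd_sub hdvd (hpq.trans hu2)
      simpa using this
    have : (p : ℤ) ≤ 2 := Int.le_of_dvd (by norm_num) h2
    have : (5 : ℤ) ≤ p := by exact_mod_cast hp5
    omega
  have hcuq : IsCoprime u q := ((hpZ.coprime_iff_not_dvd).mpr hpu).symm.pow_right
  have hcuM : IsCoprime u (M : ℤ) := ⟨1, -i, by ring⟩
  have hcuN : IsCoprime u (q * M) := hcuq.mul_right hcuM
  obtain ⟨a, b, hab⟩ := (hcuN.pow_right : IsCoprime u ((q * (M : ℤ)) ^ 2))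
  refine ⟨u, a, -(b * (q * M)), hu1, hu2, by linear_combination hab, ⟨-b, by ring⟩, ?_, hcuq,
    ?_, ?_⟩
  · have h1 : (M : ℤ) ∣ (u * a - 1) := ⟨q * (-(b * (q * M))), by linear_combination hab⟩
    have h2 : a - 1 = (u * a - 1) - (u - 1) * a := by ring
    rw [h2]; exact dvd_sub h1 (hu1.mul_right a)
  · have hpa : ¬ (p : ℤ) ∣ (a ^ 2 - 1) := by
      intro hd
      have hua : (p : ℤ) ∣ (u * a - 1) :=
        hpq.trans ⟨M * (-(b * (q * M))), by linear_combination hab⟩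
      have h2a : (p : ℤ) ∣ (2 * a - 1) := by
        have h3 : 2 * a - 1 = (u * a - 1) - (u - 2) * a := by ring
        rw [h3]; exact dvd_sub hua ((hpq.trans hu2).mul_right a)
      have h3 : (p : ℤ) ∣ 3 := by
        have h4 : (3 : ℤ) = (2 * a - 1) * (2 * a + 1) - 4 * (a ^ 2 - 1) := by ring
        rw [h4]; exact dvd_sub (h2a.mul_right _) (hd.mul_left 4)
      have : (p : ℤ) ≤ 3 := Int.le_of_dvd (by norm_num) h3
      have : (5 : ℤ) ≤ p := by exact_mod_cast hp5
      omega
    exact ((hpZ.coprime_iff_not_dvd).mpr hpa).symm.pow_right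
  · exact ⟨u, b * q * (M : ℤ) ^ 2, by linear_combination hab⟩

open scoped commutatorElement in
lemma elem_mem_commutator {d : ℕ} (ρ : SL(2, ℤ) →* GL (Fin d) ℂ) (p k M : ℕ)
    (hp : p.Prime) (hp5 : 5 ≤ p) (hk : 1 ≤ k)
    (hcop : IsCoprime ((M : ℤ)) ((p : ℤ) ^ k))
    (hker : Gamma (p ^ k * M) ≤ ρ.ker) (t : ℤ) (ht : (M : ℤ) ∣ t) :
    ρ (E12 t) ∈ ⁅(Gamma M).map ρ, (Gamma M).map ρ⁆ ∧
    ρ (E21 t) ∈ ⁅(Gamma M).map ρ, (Gamma M).map ρ⁆ := by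
  set q : ℤ := (p : ℤ) ^ k with hq
  have hpZ : Prime (p : ℤ) := Nat.prime_iff_prime_int.mp hp
  have hpq : (p : ℤ) ∣ q := dvd_pow_self _ (by omega)
  have hp5' : (5 : ℤ) ≤ p := by exact_mod_cast hp5
  obtain ⟨u, w, e, hu1, hu2, huw, hne, hw1, hcuq, hcw21, hcwq⟩ :=
    exists_u p k M hp hp5 hk hcop
  set nZ : ℤ := q * M with hnZ
  have hcast : ((p ^ k * M : ℕ) : ℤ) = nZ := by push_cast [hq, hnZ]; ring
  have hMn : (M : ℤ) ∣ nZ := ⟨q, by rw [hnZ]; ring⟩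
  -- the diagonal-mod-n matrix A
  set A : SL(2, ℤ) := ⟨!![u, e; nZ, w], by
    rw [Matrix.det_fin_two_of]; linear_combination huw⟩ with hA
  have hAmem : A ∈ Gamma M := by
    rw [Gamma_mem]
    refine ⟨?_, ?_, ?_, ?_⟩
    · show ((u : ZMod M) = 1)
      have := cast_eq_of_dvd (y := 1) (n := M) hu1
      simpa using this
    · show ((e : ZMod M) = 0)
      exact (ZMod.intCast_zmod_eq_zero_iff_dvd e M).mpr (hMn.trans hne)
    · show (((nZ : ℤ) : ZMod M) = 0)
      exact (ZMod.intCast_zmod_eq_zero_iff_dvd nZ M).mpr hMn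
    · show ((w : ZMod M) = 1)
      have := cast_eq_of_dvd (y := 1) (n := M) hw1
      simpa using this
  -- helper to convert divisibility into ZMod (p^k*M) equalities
  have hconv : ∀ x y : ℤ, nZ ∣ x - y → ((x : ZMod (p ^ k * M)) = (y : ZMod (p ^ k * M))) := by
    intro x y hxy
    exact cast_eq_of_dvd (by rw [hcast]; exact hxy)
  have hq3 : IsCoprime (3 : ℤ) q := by
    have : ¬ (p : ℤ) ∣ 3 := fun hd => by
      have := Int.le_of_dvd (by norm_num) hd; omega
    exact ((hpZ.coprime_iff_not_dvd).mpr this).symm.pow_right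
  constructor
  · -- E12 case
    obtain ⟨s, hMs, hqs⟩ := solve q M 3 t hq3 hcop
    have hBmem : E12 s ∈ Gamma M := E12_mem_Gamma hMs
    have hqn : q ∣ nZ := ⟨M, rfl⟩
    have huw' : u * w - 1 = nZ * e := by linear_combination huw
    have hX : nZ ∣ u * s - (s + t) * w := by
      have hqX : q ∣ u * s - (s + t) * w := by
        have h1 : u * (u * s - (s + t) * w) =
            ((u - 2) * (u + 2)) * s + (3 * s - t) - (s + t) * (nZ * e) := by
          linear_combination (-(s : ℤ) - t) * huw'
        have h2 : q ∣ u * (u * s - (s + t) * w) := by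
          rw [h1]
          exact dvd_sub (dvd_add ((hu2.mul_right (u + 2)).mul_right s) hqs)
            ((hqn.mul_right e).mul_left (s + t))
        exact (hcuq.symm.dvd_of_dvd_mul_left) h2
      have hMX : (M : ℤ) ∣ u * s - (s + t) * w :=
        dvd_sub (hMs.mul_left u) ((dvd_add hMs ht).mul_right w)
      exact hcop.symm.mul_dvd hqX hMX
    have z1 : ((u * s - (s + t) * w : ℤ) : ZMod (p ^ k * M)) = 0 := by
      rw [ZMod.intCast_zmod_eq_zero_iff_dvd, hcast]; exact hX
    have zn : ((nZ : ℤ) : ZMod (p ^ k * M)) = 0 := by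
      rw [ZMod.intCast_zmod_eq_zero_iff_dvd, hcast]
    have ze : ((e : ℤ) : ZMod (p ^ k * M)) = 0 := by
      rw [ZMod.intCast_zmod_eq_zero_iff_dvd, hcast]; exact hne
    push_cast at z1 zn ze
    have hkey : ρ (A * E12 s) = ρ (E12 t * (E12 s * A)) := by
      apply rho_congr ρ hker
      intro i j
      fin_cases i <;> fin_cases j <;> simp only [Matrix.SpecialLinearGroup.coe_mul] <;>
        simp [hA, E12, Matrix.SpecialLinearGroup.coe_mul, Matrix.mul_apply,
          Fin.sum_univ_two] <;> push_cast
      · linear_combination (-(s : ZMod (p ^ k * M)) - (t : ZMod (p ^ k * M))) * zn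
      · linear_combination z1
      · linear_combination (s : ZMod (p ^ k * M)) * zn
    rw [_root_.map_mul, _root_.map_mul, _root_.map_mul] at hkey
    have hT : ρ (E12 t) = ⁅ρ A, ρ (E12 s)⁆ := by
      have h3 : ρ (E12 t) = (ρ A * ρ (E12 s)) * (ρ (E12 s) * ρ A)⁻¹ := by
        rw [hkey]; group
      rw [commutatorElement_def, h3]; group
    rw [hT]
    exact Subgroup.commutator_mem_commutator (Subgroup.mem_map_of_mem ρ hAmem)
      (Subgroup.mem_map_of_mem ρ hBmem)
  · -- E21 case
    obtain ⟨s, hMs, hqs⟩ := solve q M (w ^ 2 - 1) t hcw21 hcop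
    have hBmem : E21 s ∈ Gamma M := E21_mem_Gamma hMs
    have hqn : q ∣ nZ := ⟨M, rfl⟩
    have huw' : u * w - 1 = nZ * e := by linear_combination huw
    have hX : nZ ∣ w * s - (t + s) * u := by
      have hqX : q ∣ w * s - (t + s) * u := by
        have h1 : w * (w * s - (t + s) * u) =
            ((w ^ 2 - 1) * s - t) - (t + s) * (nZ * e) := by
          linear_combination (-(t : ℤ) - s) * huw'
        have h2 : q ∣ w * (w * s - (t + s) * u) := by
          rw [h1]
          exact dvd_sub hqs ((hqn.mul_right e).mul_left (t + s))
        exact (hcwq.symm.dvd_of_dvd_mul_left) h2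
      have hMX : (M : ℤ) ∣ w * s - (t + s) * u :=
        dvd_sub (hMs.mul_left w) ((dvd_add ht hMs).mul_right u)
      exact hcop.symm.mul_dvd hqX hMX
    have z1 : ((w * s - (t + s) * u : ℤ) : ZMod (p ^ k * M)) = 0 := by
      rw [ZMod.intCast_zmod_eq_zero_iff_dvd, hcast]; exact hX
    have zn : ((nZ : ℤ) : ZMod (p ^ k * M)) = 0 := by
      rw [ZMod.intCast_zmod_eq_zero_iff_dvd, hcast]
    have ze : ((e : ℤ) : ZMod (p ^ k * M)) = 0 := by
      rw [ZMod.intCast_zmod_eq_zero_iff_dvd, hcast]; exact hne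
    push_cast at z1 zn ze
    have hkey : ρ (A * E21 s) = ρ (E21 t * (E21 s * A)) := by
      apply rho_congr ρ hker
      intro i j
      fin_cases i <;> fin_cases j <;> simp only [Matrix.SpecialLinearGroup.coe_mul] <;>
        simp [hA, E21, Matrix.SpecialLinearGroup.coe_mul, Matrix.mul_apply,
          Fin.sum_univ_two] <;> push_cast
      · linear_combination (s : ZMod (p ^ k * M)) * ze
      · linear_combination z1
      · linear_combination (-(t : ZMod (p ^ k * M)) - (s : ZMod (p ^ k * M))) * ze
    rw [_root_.map_mul, _root_.map_mul, _root_.map_mul] at hkey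
    have hT : ρ (E21 t) = ⁅ρ A, ρ (E21 s)⁆ := by
      have h3 : ρ (E21 t) = (ρ A * ρ (E21 s)) * (ρ (E21 s) * ρ A)⁻¹ := by
        rw [hkey]; group
      rw [commutatorElement_def, h3]; group
    rw [hT]
    exact Subgroup.commutator_mem_commutator (Subgroup.mem_map_of_mem ρ hAmem)
      (Subgroup.mem_map_of_mem ρ hBmem)


lemma eq_bot_of_solvable_perfect {G : Type*} [Group G] (H : Subgroup G)
    (hs : IsSolvable ↥H) (hc : ⁅H, H⁆ = H) : H = ⊥ := by
  have h1 : commutator ↥H = ⊤ := by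
    apply Subgroup.map_injective H.subtype_injective
    rw [commutator_def, Subgroup.map_commutator, ← MonoidHom.range_eq_map,
      Subgroup.range_subtype, hc]
  have h2 : ∀ n, derivedSeries ↥H n = ⊤ := by
    intro n
    induction n with
    | zero => rfl
    | succ n ih => rw [derivedSeries_succ, ih, ← commutator_def, h1]
  obtain ⟨n, hn⟩ := hs
  rw [h2 n] at hn
  rw [eq_bot_iff]
  intro g hg
  have h3 : (⟨g, hg⟩ : ↥H) ∈ (⊥ : Subgroup ↥H) := hn ▸ Subgroup.mem_top _
  simpa [Subgroup.mem_bot, Subtype.ext_iff] using h3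

lemma commutator_le_self {G : Type*} [Group G] (H : Subgroup G) : ⁅H, H⁆ ≤ H := by
  rw [Subgroup.commutator_le]
  intro g1 h1 g2 h2
  exact mul_mem (mul_mem (mul_mem h1 h2) (inv_mem h1)) (inv_mem h2)

lemma dvd_of_cast_eq {n : ℕ} {x y : ℤ} (h : (x : ZMod n) = (y : ZMod n)) :
    (n : ℤ) ∣ x - y := by
  rw [← ZMod.intCast_zmod_eq_zero_iff_dvd]
  push_cast
  rw [h]; ring


lemma gamma_le_ker {d : ℕ} (ρ : SL(2, ℤ) →* GL (Fin d) ℂ)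
    (hsolv : IsSolvable ρ.range) (p k M : ℕ)
    (hp : p.Prime) (hp5 : 5 ≤ p) (hk : 1 ≤ k)
    (hcop : IsCoprime ((M : ℤ)) ((p : ℤ) ^ k))
    (hker : Gamma (p ^ k * M) ≤ ρ.ker) : Gamma M ≤ ρ.ker := by
  set q : ℤ := (p : ℤ) ^ k with hq
  have hpZ : Prime (p : ℤ) := Nat.prime_iff_prime_int.mp hp
  have hpq : (p : ℤ) ∣ q := dvd_pow_self _ (by omega)
  have hp5' : (5 : ℤ) ≤ p := by exact_mod_cast hp5
  set H := (Gamma M).map ρ with hH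
  have key : ∀ g ∈ Gamma M, ρ g ∈ ⁅H, H⁆ := by
    intro g hg
    obtain ⟨hg1, hg2, hg3, hg4⟩ := Gamma_mem.mp hg
    set a : ℤ := g 0 0 with ha
    set b : ℤ := g 0 1 with hb
    set c : ℤ := g 1 0 with hc'
    set d' : ℤ := g 1 1 with hd'
    have hMa : (M : ℤ) ∣ a - 1 := dvd_of_cast_eq (by push_cast; rw [hg1])
    have hMb : (M : ℤ) ∣ b := by simpa using dvd_of_cast_eq (y := 0) (by push_cast; rw [hg2])
    have hMc : (M : ℤ) ∣ c := by simpa using dvd_of_cast_eq (y := 0) (by push_cast; rw [hg3])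
    have hMd : (M : ℤ) ∣ d' - 1 := dvd_of_cast_eq (by push_cast; rw [hg4])
    have hdet : a * d' - b * c = 1 := by
      have h := g.property
      rw [Matrix.det_fin_two] at h
      exact h
    -- choose y
    obtain ⟨y, hMy, hpc1⟩ : ∃ y : ℤ, (M : ℤ) ∣ y ∧ ¬ (p : ℤ) ∣ (y * a + c) := by
      by_cases hpc : (p : ℤ) ∣ c
      · have hpa : ¬ (p : ℤ) ∣ a := by
          intro hpa
          have h1 : (p : ℤ) ∣ 1 := by
            rw [← hdet]
            exact dvd_sub (hpa.mul_right d') (hpc.mul_left b)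
          have := Int.le_of_dvd (by norm_num) h1
          omega
        have hca : IsCoprime a q := ((hpZ.coprime_iff_not_dvd).mpr hpa).symm.pow_right
        obtain ⟨y, hMy, hqy⟩ := solve q M a (1 - c) hca hcop
        refine ⟨y, hMy, ?_⟩
        intro hdvd
        have h1 : q ∣ (y * a + c) - 1 := by
          have h2 : (y * a + c) - 1 = a * y - (1 - c) := by ring
          rw [h2]; exact hqy
        have h2 : (p : ℤ) ∣ 1 := by
          have := dvd_sub hdvd (hpq.trans h1)
          simpa using this
        have := Int.le_of_dvd (by norm_num) h2
        omega
      · exact ⟨0, dvd_zero _, by simpa using hpc⟩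
    have hMc1 : (M : ℤ) ∣ (y * a + c) := dvd_add (hMy.mul_right a) hMc
    have hcc1 : IsCoprime (y * a + c) q := ((hpZ.coprime_iff_not_dvd).mpr hpc1).symm.pow_right
    obtain ⟨x, hMx, hqx⟩ := solve q M (y * a + c) (1 - a) hcc1 hcop
    have hqa2 : q ∣ (a + x * (y * a + c)) - 1 := by
      have h1 : (a + x * (y * a + c)) - 1 = (y * a + c) * x - (1 - a) := by ring
      rw [h1]; exact hqx
    have hMa2 : (M : ℤ) ∣ (a + x * (y * a + c)) - 1 := by
      have h1 : (a + x * (y * a + c)) - 1 = (a - 1) + x * (y * a + c) := by ring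
      rw [h1]; exact dvd_add hMa (hMx.mul_right _)
    have hna2 : ((p ^ k * M : ℕ) : ℤ) ∣ (a + x * (y * a + c)) - 1 := by
      push_cast
      exact hcop.symm.mul_dvd hqa2 hMa2
    have hMb2 : (M : ℤ) ∣ (b + x * (y * b + d')) := dvd_add hMb (hMx.mul_right _)
    -- ZMod facts
    have za2 : ((a : ZMod (p ^ k * M)) + x * (y * a + c) = 1) := by
      have h1 := (ZMod.intCast_zmod_eq_zero_iff_dvd _ (p ^ k * M)).mpr hna2
      push_cast at h1
      linear_combination h1
    have zdet : ((a : ZMod (p ^ k * M)) * d' - b * c = 1) := by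
      have h1 := congrArg (fun z : ℤ => (z : ZMod (p ^ k * M))) hdet
      push_cast at h1
      linear_combination h1
    have hkey : ρ (E21 (-(y * a + c)) * (E12 x * (E21 y * g))) =
        ρ (E12 (b + x * (y * b + d'))) := by
      apply rho_congr ρ hker
      intro i j
      have hgmat : (g : Matrix (Fin 2) (Fin 2) ℤ) = !![a, b; c, d'] := by
        rw [Matrix.eta_fin_two (g : Matrix (Fin 2) (Fin 2) ℤ)]
      fin_cases i <;> fin_cases j <;> simp only [Matrix.SpecialLinearGroup.coe_mul] <;>
        simp [E12, E21, Matrix.SpecialLinearGroup.coe_mul, hgmat, Matrix.mul_apply,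
          Fin.sum_univ_two] <;> push_cast
      · linear_combination za2
      · linear_combination ((-(c : ZMod (p ^ k * M))) - y * a) * za2
      · linear_combination zdet - ((y : ZMod (p ^ k * M)) * b + d') * za2
    rw [_root_.map_mul, _root_.map_mul, _root_.map_mul] at hkey
    have hg' : ρ g = (ρ (E21 y))⁻¹ * ((ρ (E12 x))⁻¹ *
        ((ρ (E21 (-(y * a + c))))⁻¹ * ρ (E12 (b + x * (y * b + d'))))) := by
      rw [← hkey]; group
    rw [hg']
    have hmem := fun (t : ℤ) (ht : (M : ℤ) ∣ t) =>
      elem_mem_commutator ρ p k M hp hp5 hk hcop hker t ht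
    exact mul_mem (inv_mem (hmem y hMy).2)
      (mul_mem (inv_mem (hmem x hMx).1)
        (mul_mem (inv_mem (hmem _ (dvd_neg.mpr hMc1)).2) (hmem _ hMb2).1))
  -- now conclude
  have hle : H ≤ ⁅H, H⁆ := by
    rintro _ ⟨g, hg, rfl⟩
    exact key g hg
  have hperf : ⁅H, H⁆ = H := le_antisymm (commutator_le_self H) hle
  have hrange : H ≤ ρ.range := by
    rintro _ ⟨g, hg, rfl⟩
    exact ⟨g, rfl⟩
  haveI : Group.IsSolvable ρ.range := hsolv
  have hsolvH : IsSolvable ↥H :=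
    solvable_of_solvable_injective (Subgroup.inclusion_injective hrange)
  have hbot : H = ⊥ := eq_bot_of_solvable_perfect H hsolvH hperf
  intro g hg
  have h1 : ρ g ∈ H := Subgroup.mem_map_of_mem ρ hg
  rw [hbot, Subgroup.mem_bot] at h1
  exact h1


lemma two_three (N : ℕ) (hN : 0 < N) (h : ∀ q : ℕ, q.Prime → q ∣ N → q ≤ 3) :
    ∃ a b : ℕ, N = 2 ^ a * 3 ^ b := by
  induction N using Nat.strong_induction_on with
  | _ N ih =>
    rcases eq_or_lt_of_le (Nat.succ_le_of_lt hN) with h1 | h1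
    · exact ⟨0, 0, by omega⟩
    · have hN1 : N ≠ 1 := by omega
      have hpf : N.minFac.Prime := Nat.minFac_prime hN1
      have hdvd : N.minFac ∣ N := Nat.minFac_dvd N
      have hle : N.minFac ≤ 3 := h _ hpf hdvd
      have h2 : 2 ≤ N.minFac := hpf.two_le
      obtain ⟨m, hm⟩ := hdvd
      have hmpos : 0 < m := by
        by_contra h0
        push_neg at h0
        interval_cases m <;> omega
      have hmlt : m < N := by nlinarith
      obtain ⟨a, b, hab⟩ := ih m hmlt hmpos (fun q hq hqd => h q hq (hm ▸ hqd.mul_left N.minFac))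
      interval_cases hmf : N.minFac
      · exact ⟨a + 1, b, by rw [hm, hab]; ring⟩
      · exact ⟨a, b + 1, by rw [hm, hab]; ring⟩
  

end SolvableLevelAux

open SolvableLevelAux

/-- If ρ : SL₂(ℤ) → GL_d(ℂ) has solvable image and ker ρ
contains the principal congruence subgroup Γ(N) with N minimal (the level),
then N = 2^a·3^b for some nonnegative integers a, b. -/
theorem solvable_image_level (d : ℕ) (ρ : SL(2, ℤ) →* GL (Fin d) ℂ)
    (hsolv : IsSolvable ρ.range) (N : ℕ) (hN : 0 < N)
    (hker : Gamma N ≤ ρ.ker)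
    (hmin : ∀ M : ℕ, 0 < M → Gamma M ≤ ρ.ker → N ≤ M) :
    ∃ a b : ℕ, N = 2 ^ a * 3 ^ b := by
  apply two_three N hN
  intro q hqp hqd
  by_contra hq4
  push_neg at hq4
  have hq5 : 5 ≤ q := by
    rcases Nat.lt_or_ge q 5 with h5 | h5
    · interval_cases q <;> simp_all (config := { decide := true })
    · exact h5
  set k : ℕ := N.factorization q with hk'
  set M : ℕ := N / q ^ k with hM'
  have hk : 1 ≤ k := hqp.factorization_pos_of_dvd hN.ne' hqd
  have hNe : q ^ k * M = N := Nat.ordProj_mul_ordCompl_eq_self N q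
  have hnd : ¬ q ∣ M := Nat.not_dvd_ordCompl hqp hN.ne'
  have hMpos : 0 < M := Nat.ordCompl_pos q hN.ne'
  have hcop : IsCoprime ((M : ℤ)) ((q : ℤ) ^ k) := by
    have h1 : Nat.Coprime M q := (Nat.coprime_comm.mp ((Nat.Prime.coprime_iff_not_dvd hqp).mpr hnd))
    exact (Nat.isCoprime_iff_coprime.mpr h1).pow_right
  have hker' : Gamma (q ^ k * M) ≤ ρ.ker := by rw [hNe]; exact hker
  have hle := gamma_le_ker ρ hsolv q k M hqp hq5 hk hcop hker'
  have hNM := hmin M hMpos hle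
  have hqk : 2 ≤ q ^ k := by
    calc 2 ≤ q := by omega
    _ = q ^ 1 := (pow_one q).symm
    _ ≤ q ^ k := Nat.pow_le_pow_right (by omega) hk
  nlinarith [hNe, hMpos, hNM]
end

section
/- Γ(3/4)·Γ(5/12) / (Γ(1/4)·Γ(11/12)) = √(2√3 − 3), where Γ denotes the Euler gamma function. -/
open Real Set

namespace GammaTriplication

/-- Auxiliary definition for the triplication formula. -/
noncomputable def triplingGamma (s : ℝ) : ℝ :=
  Real.Gamma (s / 3) * Real.Gamma (s / 3 + 1 / 3) * Real.Gamma (s / 3 + 2 / 3) * 3 ^ (s - 1) /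
    (Real.Gamma (1 / 3) * Real.Gamma (2 / 3))

theorem triplingGamma_add_one (s : ℝ) (hs : s ≠ 0) :
    triplingGamma (s + 1) = s * triplingGamma s := by
  rw [triplingGamma, triplingGamma,
    (by ring : (s + 1) / 3 + 2 / 3 = s / 3 + 1),
    (by ring : (s + 1) / 3 + 1 / 3 = s / 3 + 2 / 3),
    (by ring : (s + 1) / 3 = s / 3 + 1 / 3),
    (by abel : s + 1 - 1 = s - 1 + 1),
    Real.Gamma_add_one (div_ne_zero hs three_ne_zero),
    Real.rpow_add (by norm_num : (0:ℝ) < 3), Real.rpow_one]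
  ring

theorem triplingGamma_one : triplingGamma 1 = 1 := by
  have h13 : (0:ℝ) < Real.Gamma (1/3) := Real.Gamma_pos_of_pos (by norm_num)
  have h23 : (0:ℝ) < Real.Gamma (2/3) := Real.Gamma_pos_of_pos (by norm_num)
  rw [triplingGamma]
  norm_num [Real.Gamma_one]
  field_simp
  exact ⟨h13.ne', h23.ne'⟩

theorem convexOn_log_Gamma_comp (c : ℝ) (hc : 0 ≤ c) :
    ConvexOn ℝ (Ioi 0) fun s : ℝ => Real.log (Real.Gamma (s / 3 + c)) := by
  refine ⟨convex_Ioi 0, fun x hx y hy a b ha hb hab => ?_⟩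
  have hx' : x / 3 + c ∈ Ioi (0:ℝ) :=
    add_pos_of_pos_of_nonneg (by have := mem_Ioi.mp hx; linarith) hc
  have hy' : y / 3 + c ∈ Ioi (0:ℝ) :=
    add_pos_of_pos_of_nonneg (by have := mem_Ioi.mp hy; linarith) hc
  have key := Real.convexOn_log_Gamma.2 hx' hy' ha hb hab
  simp only [Function.comp_apply, smul_eq_mul] at key ⊢
  have harg : (a * x + b * y) / 3 + c = a * (x / 3 + c) + b * (y / 3 + c) := by
    linear_combination (-c) * hab
  rw [harg]
  exact key

theorem log_triplingGamma_eq :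
    EqOn (Real.log ∘ triplingGamma)
      (fun s => Real.log (Real.Gamma (s / 3)) + Real.log (Real.Gamma (s / 3 + 1 / 3)) +
        Real.log (Real.Gamma (s / 3 + 2 / 3)) + s * Real.log 3 -
        Real.log (3 * (Real.Gamma (1/3) * Real.Gamma (2/3))))
      (Ioi 0) := by
  intro s hs
  have hs' : (0:ℝ) < s := mem_Ioi.mp hs
  have h13 : (0:ℝ) < Real.Gamma (1/3) := Real.Gamma_pos_of_pos (by norm_num)
  have h23 : (0:ℝ) < Real.Gamma (2/3) := Real.Gamma_pos_of_pos (by norm_num)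
  have h1 : Real.Gamma (s / 3) ≠ 0 := (Real.Gamma_pos_of_pos (by linarith)).ne'
  have h2 : Real.Gamma (s / 3 + 1 / 3) ≠ 0 := (Real.Gamma_pos_of_pos (by linarith)).ne'
  have h3 : Real.Gamma (s / 3 + 2 / 3) ≠ 0 := (Real.Gamma_pos_of_pos (by linarith)).ne'
  have h4 : (3:ℝ) ^ (s - 1) ≠ 0 := (Real.rpow_pos_of_pos (by norm_num) _).ne'
  have h5 : Real.Gamma (1/3) * Real.Gamma (2/3) ≠ 0 := (mul_pos h13 h23).ne'
  rw [Function.comp_apply, triplingGamma,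
    Real.log_div (by positivity) h5,
    Real.log_mul (by positivity) h4,
    Real.log_mul (by positivity) h3,
    Real.log_mul h1 h2,
    Real.log_rpow (by norm_num),
    Real.log_mul three_ne_zero h5]
  ring_nf

theorem triplingGamma_log_convex_Ioi :
    ConvexOn ℝ (Ioi (0:ℝ)) (Real.log ∘ triplingGamma) := by
  refine ((((by
      simpa only [add_zero] using convexOn_log_Gamma_comp 0 le_rfl :
        ConvexOn ℝ (Ioi (0:ℝ)) fun s : ℝ => Real.log (Real.Gamma (s / 3))).add
      (convexOn_log_Gamma_comp (1/3) (by norm_num))).add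
      (convexOn_log_Gamma_comp (2/3) (by norm_num))).add ?_).add_const _
        |>.congr log_triplingGamma_eq.symm
  simpa only [mul_comm _ (Real.log _), smul_eq_mul] using
    ((convexOn_id (convex_Ioi (0:ℝ))).smul (Real.log_pos (by norm_num : (1:ℝ) < 3)).le :
      ConvexOn ℝ (Ioi (0:ℝ)) fun s : ℝ => Real.log 3 * s)

theorem triplingGamma_eq_Gamma {s : ℝ} (hs : 0 < s) : triplingGamma s = Real.Gamma s := by
  refine Real.eq_Gamma_of_log_convex triplingGamma_log_convex_Ioi
    (fun {y} hy => triplingGamma_add_one y hy.ne') (fun {y} hy => ?_) triplingGamma_one hs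
  unfold triplingGamma
  exact div_pos
    (mul_pos (mul_pos (mul_pos (Real.Gamma_pos_of_pos (by linarith))
      (Real.Gamma_pos_of_pos (by linarith))) (Real.Gamma_pos_of_pos (by linarith)))
      (Real.rpow_pos_of_pos (by norm_num) _))
    (mul_pos (Real.Gamma_pos_of_pos (by norm_num)) (Real.Gamma_pos_of_pos (by norm_num)))

/-- Gauss triplication formula for positive real arguments. -/
theorem Gamma_triplication {s : ℝ} (hs : 0 < s) :
    Real.Gamma s * Real.Gamma (s + 1 / 3) * Real.Gamma (s + 2 / 3) =
      Real.Gamma (3 * s) * 3 ^ (1 - 3 * s) * (Real.Gamma (1/3) * Real.Gamma (2/3)) := by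
  have h := triplingGamma_eq_Gamma (mul_pos (by norm_num : (0:ℝ) < 3) hs)
  rw [triplingGamma, mul_div_cancel_left₀ _ (three_ne_zero' ℝ)] at h
  have h5 : Real.Gamma (1/3) * Real.Gamma (2/3) ≠ 0 :=
    (mul_pos (Real.Gamma_pos_of_pos (by norm_num)) (Real.Gamma_pos_of_pos (by norm_num))).ne'
  have h4 : (3:ℝ) ^ (3 * s - 1) ≠ 0 := (Real.rpow_pos_of_pos (by norm_num) _).ne'
  rw [(by ring : 1 - 3 * s = -(3 * s - 1)), Real.rpow_neg (by norm_num : (0:ℝ) ≤ 3)]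
  field_simp at h ⊢
  linarith [h]

end GammaTriplication

/-- Γ(3/4)·Γ(5/12) / (Γ(1/4)·Γ(11/12)) = √(2√3 − 3), where Γ is
the Euler gamma function. -/
theorem gamma_quotient_identity :
    Real.Gamma (3 / 4) * Real.Gamma (5 / 12) / (Real.Gamma (1 / 4) * Real.Gamma (11 / 12)) =
      Real.sqrt (2 * Real.sqrt 3 - 3) := by
  have hs12 : 0 < Real.sin (π / 12) :=
    Real.sin_pos_of_pos_of_lt_pi (by positivity) (by linarith [Real.pi_pos])
  -- triplication at s = 1/12
  have T := GammaTriplication.Gamma_triplication (show (0:ℝ) < 1/12 by norm_num)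
  norm_num at T
  -- T : Γ(1/12) * Γ(5/12) * Γ(3/4) = Γ(1/4) * 3^(3/4) * (Γ(1/3) * Γ(2/3))
  -- reflection formulas
  have R1 := Real.Gamma_mul_Gamma_one_sub (1/3)
  have R2 := Real.Gamma_mul_Gamma_one_sub (1/12)
  norm_num at R1 R2
  rw [show π * (1/3) = π / 3 by ring, Real.sin_pi_div_three] at R1
  rw [show π * (1/12) = π / 12 by ring] at R2
  -- positivity facts
  have g112 : 0 < Real.Gamma (1/12) := Real.Gamma_pos_of_pos (by norm_num)
  have g14 : 0 < Real.Gamma (1/4) := Real.Gamma_pos_of_pos (by norm_num)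
  have g1112 : 0 < Real.Gamma (11/12) := Real.Gamma_pos_of_pos (by norm_num)
  have hsqrt3 : (0:ℝ) < Real.sqrt 3 := Real.sqrt_pos.mpr (by norm_num)
  have hsq3 : Real.sqrt 3 ^ 2 = 3 := Real.sq_sqrt (by norm_num)
  -- the ratio equals 2 sin(π/12) 3^(3/4) / √3
  have hR : Real.Gamma (3 / 4) * Real.Gamma (5 / 12) /
      (Real.Gamma (1 / 4) * Real.Gamma (11 / 12)) =
      2 * Real.sin (π / 12) * (3:ℝ) ^ ((3:ℝ)/4) / Real.sqrt 3 := by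
    rw [div_eq_div_iff (by positivity) hsqrt3.ne']
    have hcancel : Real.Gamma (1/12) * Real.sin (π / 12) ≠ 0 := by positivity
    refine mul_right_cancel₀ hcancel ?_
    have R1' : Real.Gamma (1/3) * Real.Gamma (2/3) * Real.sin (π / 3) = π := by
      rw [R1]; field_simp
      rw [Real.sin_pi_div_three]; ring
    have R2' : Real.Gamma (1/12) * Real.Gamma (11/12) * Real.sin (π / 12) = π := by
      rw [R2]; field_simp
    have hs3 : Real.sin (π / 3) = Real.sqrt 3 / 2 := Real.sin_pi_div_three
    linear_combination (Real.sqrt 3 * Real.sin (π / 12)) * T +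
      (-(2 * Real.Gamma (1/4) * (3:ℝ) ^ ((3:ℝ)/4) * Real.sin (π / 12) *
        Real.Gamma (1/3) * Real.Gamma (2/3))) * hs3 +
      (2 * Real.Gamma (1/4) * (3:ℝ) ^ ((3:ℝ)/4) * Real.sin (π / 12)) * R1' +
      (-(2 * Real.Gamma (1/4) * (3:ℝ) ^ ((3:ℝ)/4) * Real.sin (π / 12))) * R2'
  -- square of the RHS
  have h1 : Real.sin (π / 12) ^ 2 = 1/2 - Real.sqrt 3 / 4 := by
    have hc := Real.cos_sq (π / 12)
    rw [show 2 * (π / 12) = π / 6 by ring, Real.cos_pi_div_six] at hc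
    have hsin := Real.sin_sq_add_cos_sq (π / 12)
    nlinarith [hc, hsin]
  have h3 : ((3:ℝ) ^ ((3:ℝ)/4)) ^ 2 = 3 * Real.sqrt 3 := by
    rw [← Real.rpow_natCast ((3:ℝ) ^ ((3:ℝ)/4)) 2, ← Real.rpow_mul (by norm_num : (0:ℝ) ≤ 3)]
    rw [show (3:ℝ)/4 * (2:ℕ) = 1 + 1/2 by push_cast; ring,
      Real.rpow_add (by norm_num : (0:ℝ) < 3), Real.rpow_one, ← Real.sqrt_eq_rpow]
  have hsq : (2 * Real.sin (π / 12) * (3:ℝ) ^ ((3:ℝ)/4) / Real.sqrt 3) ^ 2 =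
      2 * Real.sqrt 3 - 3 := by
    rw [div_pow, mul_pow, mul_pow, h1, h3, hsq3]
    linear_combination (-(1:ℝ)) * hsq3
  have hX : 0 ≤ 2 * Real.sin (π / 12) * (3:ℝ) ^ ((3:ℝ)/4) / Real.sqrt 3 := by positivity
  rw [hR, ← hsq, Real.sqrt_sq hX]
end
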